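/- arXiv:2204.11387 — 5 statements merged into one kernel-verified Lean document; each statement's English description precedes it below -/
import Mathlib

section
/- Let P₁, …, Pₙ be pairwise commuting contractions on a complex Hilbert space H. Then the product P₁P₂⋯Pₙ is unitary if and only if each Pᵢ is unitary. -/
/-!
If `a` and `b` are commuting contractions in a C⋆-algebra and `a * b` is unitary, then `a` is
invertible (a factor of a unit in a commutative pair), and `b * a = a * b` being unitary gives
`1 = star a * (star b * b) * a ≤ star a * a ≤ 1`, so `a` is unitary. For a product of pairwise
commuting contractions, peel off one factor at a time: the remaining product is again a
contraction commuting with it.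
-/

lemma List.norm_prod_le_one {α : Type*} [SeminormedRing α] [NormOneClass α] {l : List α}
    (h : ∀ a ∈ l, ‖a‖ ≤ 1) : ‖l.prod‖ ≤ 1 :=
  (Submonoid.mem_unitClosedBall α).mp <|
    Submonoid.list_prod_mem _ fun a ha => (Submonoid.mem_unitClosedBall α).mpr (h a ha)

section CStarAlgebra

variable {A : Type*} [CStarAlgebra A] [PartialOrder A] [StarOrderedRing A]

lemma CStarAlgebra.star_mul_self_le_one {a : A} (ha : ‖a‖ ≤ 1) : star a * a ≤ 1 := by
  rw [← CStarAlgebra.norm_le_one_iff_of_nonneg (star a * a), CStarRing.norm_star_mul_self]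
  exact mul_le_one₀ ha (norm_nonneg a) ha

lemma Commute.mem_unitary_left_of_mul_mem_unitary {a b : A} (hab : Commute a b) (ha : ‖a‖ ≤ 1)
    (hb : ‖b‖ ≤ 1) (hu : a * b ∈ unitary A) : a ∈ unitary A := by
  have hunit : IsUnit a := (hab.isUnit_mul_iff.mp (Unitary.isUnit_coe (U := ⟨_, hu⟩))).1
  have hu' : b * a ∈ unitary A := hab ▸ hu
  refine hunit.mem_unitary_of_star_mul_self (le_antisymm (CStarAlgebra.star_mul_self_le_one ha) ?_)
  calc (1 : A) = star a * (star b * b) * a := by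
        rw [← Unitary.star_mul_self_of_mem hu', star_mul]; noncomm_ring
    _ ≤ star a * 1 * a := star_left_conjugate_le_conjugate (CStarAlgebra.star_mul_self_le_one hb) a
    _ = star a * a := by rw [mul_one]

lemma List.prod_mem_unitary_iff {l : List A} (hcomm : ∀ a ∈ l, ∀ b ∈ l, Commute a b)
    (hnorm : ∀ a ∈ l, ‖a‖ ≤ 1) : l.prod ∈ unitary A ↔ ∀ a ∈ l, a ∈ unitary A := by
  nontriviality A
  refine ⟨fun hu => ?_, Submonoid.list_prod_mem _⟩
  induction l with
  | nil => simp
  | cons a t ih =>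
    rw [List.prod_cons] at hu
    have hcomm_t : ∀ x ∈ t, ∀ y ∈ t, Commute x y := fun x hx y hy =>
      hcomm x (mem_cons_of_mem a hx) y (mem_cons_of_mem a hy)
    have hnorm_t : ∀ x ∈ t, ‖x‖ ≤ 1 := fun x hx => hnorm x (mem_cons_of_mem a hx)
    have ha_comm : Commute a t.prod :=
      Commute.list_prod_right t a fun x hx => hcomm a mem_cons_self x (mem_cons_of_mem a hx)
    have ha : a ∈ unitary A := ha_comm.mem_unitary_left_of_mul_mem_unitary
      (hnorm a mem_cons_self) (List.norm_prod_le_one hnorm_t) hu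
    have ht : t.prod ∈ unitary A := by
      simpa [← mul_assoc, Unitary.star_mul_self_of_mem ha] using mul_mem (Unitary.star_mem ha) hu
    exact forall_mem_cons.mpr ⟨ha, ih hcomm_t hnorm_t ht⟩

end CStarAlgebra

theorem stmt_1 {H : Type*} [NormedAddCommGroup H] [InnerProductSpace ℂ H] [CompleteSpace H]
    (n : ℕ) (P : Fin n → (H →L[ℂ] H))
    (hcomm : ∀ i j, P i * P j = P j * P i)
    (hnorm : ∀ i, ‖P i‖ ≤ 1) :
    (List.ofFn P).prod ∈ unitary (H →L[ℂ] H) ↔ ∀ i, P i ∈ unitary (H →L[ℂ] H) := by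
  rw [List.prod_mem_unitary_iff, List.forall_mem_ofFn_iff]
  · exact List.forall_mem_ofFn_iff.mpr fun i => List.forall_mem_ofFn_iff.mpr (hcomm i)
  · exact List.forall_mem_ofFn_iff.mpr hnorm
end

section
/- For (x₁, x₂, x₃) ∈ ℂ³, the strict inequality |x₁ − conj(x₂)x₃| + |x₁x₂ − x₃| < 1 − |x₂|² holds if and only if |x₂ − conj(x₁)x₃| + |x₁x₂ − x₃| < 1 − |x₁|² holds. -/
/-!
Write `a, b, t` for the moduli of `x₁, x₂, x₃` and `C = |x₁x₂ - x₃|`. The identity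
`|x₁ - x̄₂x₃|² = C² + (1 - b²)(a² - t²)` turns the first condition into
`C < 1 - b²` together with the symmetric condition `a² + b² + 2C < 1 + t²`, and likewise
the second one into `C < 1 - a²` together with the same symmetric condition. Given the
symmetric condition and `t ≤ ab + C`, the two bounds on `C` are equivalent, because
`a² + b² - 1 + 2C - (ab + C)² = (C - (1 - a)(1 + b))((1 + a)(1 - b) - C)`.
-/

open ComplexConjugate

lemma Complex.norm_sub_conj_mul_sq (u v w : ℂ) :
    ‖u - conj v * w‖ ^ 2 = ‖u * v - w‖ ^ 2 + (1 - ‖v‖ ^ 2) * (‖u‖ ^ 2 - ‖w‖ ^ 2) := by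
  simp only [Complex.sq_norm, Complex.normSq_apply, Complex.sub_re, Complex.sub_im,
    Complex.mul_re, Complex.mul_im, Complex.conj_re, Complex.conj_im]
  ring

lemma add_lt_iff_of_sq_eq {A C r s : ℝ} (hA : 0 ≤ A) (hC : 0 ≤ C) (h : A ^ 2 = C ^ 2 + r * s) :
    A + C < r ↔ C < r ∧ s + 2 * C < r := by
  have key : (r - C) ^ 2 - A ^ 2 = r * (r - 2 * C - s) := by rw [h]; ring
  constructor
  · intro hAC
    have hr : 0 < r := by linarith
    have hsq : A ^ 2 < (r - C) ^ 2 := (sq_lt_sq₀ hA (by linarith)).2 (by linarith)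
    have hpos : 0 < r * (r - 2 * C - s) := by linarith
    exact ⟨by linarith, by linarith [pos_of_mul_pos_right hpos hr.le]⟩
  · rintro ⟨hCr, hs⟩
    have hpos : 0 < r * (r - 2 * C - s) := mul_pos (by linarith) (by linarith)
    have hsq : A ^ 2 < (r - C) ^ 2 := by linarith
    linarith [(sq_lt_sq₀ hA (by linarith)).1 hsq]

lemma lt_one_sub_sq_of_lt_one_sub_sq {a b t C : ℝ} (ha : 0 ≤ a) (hb : 0 ≤ b) (ht : 0 ≤ t)
    (hC : 0 ≤ C) (htC : t ≤ a * b + C) (hS : a ^ 2 + b ^ 2 + 2 * C < 1 + t ^ 2)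
    (hCb : C < 1 - b ^ 2) : C < 1 - a ^ 2 := by
  by_contra! hCa
  -- `C` must lie outside the interval between the two roots, but `1 - a² ≤ C < 1 - b²` puts it inside.
  have hba : b < a := by nlinarith
  have hb1 : b < 1 := by nlinarith
  have hsign : (C - (1 - a) * (1 + b)) * ((1 + a) * (1 - b) - C) < 0 := by
    nlinarith [pow_le_pow_left₀ ht htC 2]
  have hq : C < (1 + a) * (1 - b) := by nlinarith
  have hp : C < (1 - a) * (1 + b) := by nlinarith
  have ha1 : 1 < a := by nlinarith
  nlinarith

lemma lt_one_sub_sq_iff_lt_one_sub_sq {a b t C : ℝ} (ha : 0 ≤ a) (hb : 0 ≤ b) (ht : 0 ≤ t)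
    (hC : 0 ≤ C) (htC : t ≤ a * b + C) (hS : a ^ 2 + b ^ 2 + 2 * C < 1 + t ^ 2) :
    C < 1 - b ^ 2 ↔ C < 1 - a ^ 2 :=
  ⟨lt_one_sub_sq_of_lt_one_sub_sq ha hb ht hC htC hS,
    lt_one_sub_sq_of_lt_one_sub_sq hb ha ht hC (by linarith [mul_comm a b]) (by linarith)⟩

theorem stmt_3 (x₁ x₂ x₃ : ℂ) :
    (‖x₁ - (starRingEnd ℂ) x₂ * x₃‖ + ‖x₁ * x₂ - x₃‖
      < 1 - ‖x₂‖ ^ 2) ↔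
    (‖x₂ - (starRingEnd ℂ) x₁ * x₃‖ + ‖x₁ * x₂ - x₃‖
      < 1 - ‖x₁‖ ^ 2) := by
  have h₂₁ := Complex.norm_sub_conj_mul_sq x₂ x₁ x₃
  rw [mul_comm x₂ x₁] at h₂₁
  rw [add_lt_iff_of_sq_eq (norm_nonneg _) (norm_nonneg _) (Complex.norm_sub_conj_mul_sq x₁ x₂ x₃),
    add_lt_iff_of_sq_eq (norm_nonneg _) (norm_nonneg _) h₂₁]
  have hS : ‖x₁‖ ^ 2 - ‖x₃‖ ^ 2 + 2 * ‖x₁ * x₂ - x₃‖ < 1 - ‖x₂‖ ^ 2 ↔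
      ‖x₂‖ ^ 2 - ‖x₃‖ ^ 2 + 2 * ‖x₁ * x₂ - x₃‖ < 1 - ‖x₁‖ ^ 2 := by
    constructor <;> intro <;> linarith
  rw [hS]
  have hx₃ : ‖x₃‖ ≤ ‖x₁‖ * ‖x₂‖ + ‖x₁ * x₂ - x₃‖ :=
    norm_mul x₁ x₂ ▸ norm_le_norm_add_norm_sub _ _
  exact and_congr_left fun hS₂ =>
    lt_one_sub_sq_iff_lt_one_sub_sq (norm_nonneg _) (norm_nonneg _) (norm_nonneg _)
      (norm_nonneg _) hx₃ (by linarith)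
end

section
/- Let F₁, F₂ be bounded operators on a complex Hilbert space E satisfying F₁F₂ = 0, F₂F₁ = 0, F₁*F₁ + F₂F₂* = I, and F₁F₁* + F₂*F₂ = I. Then for every z ∈ ℂ with |z| = 1, the operator F₁* + zF₂ is unitary. -/
open ContinuousLinearMap

/-!
Writing `x = F₁*` and `y = z • F₂`, the hypotheses say that `x` and `y` have orthogonal ranges
and orthogonal initial spaces (`x* y = 0`, `x y* = 0`), and that `x*x + y*y = 1 = x x* + y y*`;
the scalar `z` drops out of the last two because `z̄ z = 1`. Then every cross term in
`(x + y)*(x + y)` and `(x + y)(x + y)*` vanishes.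
-/

theorem add_mem_unitary_of_star_mul_eq_zero {A : Type*} [Ring A] [StarRing A] {x y : A}
    (hxy : star x * y = 0) (hyx : x * star y = 0)
    (h₁ : star x * x + star y * y = 1) (h₂ : x * star x + y * star y = 1) :
    x + y ∈ unitary A := by
  have hyx' : star y * x = 0 := by simpa using congrArg star hxy
  have hxy' : y * star x = 0 := by simpa using congrArg star hyx
  refine Unitary.mem_iff.2 ⟨?_, ?_⟩
  · rw [star_add, add_mul, mul_add, mul_add, hxy, hyx', add_zero, zero_add, h₁]
  · rw [star_add, add_mul, mul_add, mul_add, hyx, hxy', add_zero, zero_add, h₂]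

section UnitaryScalar

variable {𝕜 A : Type*} [CommSemiring 𝕜] [StarRing 𝕜] [Semiring A] [StarRing A] [Algebra 𝕜 A]
  [StarModule 𝕜 A] {z : 𝕜}

theorem star_smul_mul_smul_of_mem_unitary (hz : z ∈ unitary 𝕜) (a b : A) :
    star (z • a) * (z • b) = star a * b := by
  rw [star_smul, smul_mul_smul_comm, Unitary.star_mul_self_of_mem hz, one_smul]

theorem smul_mul_star_smul_of_mem_unitary (hz : z ∈ unitary 𝕜) (a b : A) :
    z • a * star (z • b) = a * star b := by
  rw [star_smul, smul_mul_smul_comm, Unitary.mul_star_self_of_mem hz, one_smul]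

end UnitaryScalar

theorem RCLike.mem_unitary_of_norm_eq_one {𝕜 : Type*} [RCLike 𝕜] {z : 𝕜} (hz : ‖z‖ = 1) :
    z ∈ unitary 𝕜 := by
  refine Unitary.mem_iff.2 ⟨?_, ?_⟩
  · rw [RCLike.star_def, RCLike.conj_mul, hz]; norm_num
  · rw [RCLike.star_def, RCLike.mul_conj, hz]; norm_num

theorem stmt_4 {E : Type*} [NormedAddCommGroup E] [InnerProductSpace ℂ E] [CompleteSpace E]
    (F₁ F₂ : E →L[ℂ] E)
    (h12 : F₁ * F₂ = 0) (h21 : F₂ * F₁ = 0)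
    (h1 : adjoint F₁ * F₁ + F₂ * adjoint F₂ = 1)
    (h2 : F₁ * adjoint F₁ + adjoint F₂ * F₂ = 1)
    (z : ℂ) (hz : ‖z‖ = 1) :
    adjoint F₁ + z • F₂ ∈ unitary (E →L[ℂ] E) := by
  have hz' := RCLike.mem_unitary_of_norm_eq_one hz
  simp only [← star_eq_adjoint] at h1 h2 ⊢
  apply add_mem_unitary_of_star_mul_eq_zero
  · rw [star_star, mul_smul_comm, h12, smul_zero]
  · rw [star_smul, mul_smul_comm, ← star_mul, h21, star_zero, smul_zero]
  · rw [star_star, star_smul_mul_smul_of_mem_unitary hz', h2]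
  · rw [star_star, smul_mul_star_smul_of_mem_unitary hz', h1]
end

section
/- Let F₁, F₂ be bounded operators on a complex Hilbert space E satisfying F₁F₂ = 0, F₂F₁ = 0, F₁*F₁ + F₂F₂* = I, and F₁F₁* + F₂*F₂ = I. Set U₁ = F₁* + F₂, U₂ = F₁* − F₂, and Q = (I − U₂U₁*)/2. Then F₁* = (I − Q)U₁ and F₂ = QU₁. -/
/-!
Expanding with `F₂F₁ = 0` and `F₁*F₁ + F₂F₂* = 1` gives `U₂U₁* = 1 - 2F₂F₂*`, so `Q = F₂F₂*`.
By `F₂F₁ = 0` and `F₁F₁* + F₂*F₂ = 1`, `F₂` is a partial isometry, `F₂F₂*F₂ = F₂`, while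
`F₂F₂*F₁* = F₂(F₁F₂)* = 0`. Hence `QU₁ = F₂`, and `(1 - Q)U₁ = U₁ - F₂ = F₁*`.
-/

open ContinuousLinearMap

section StarRing

variable {R : Type*} [Ring R] [StarRing R] {f₁ f₂ : R}

theorem star_sub_mul_star_star_add (h21 : f₂ * f₁ = 0) (h1 : star f₁ * f₁ + f₂ * star f₂ = 1) :
    (star f₁ - f₂) * star (star f₁ + f₂) = 1 - 2 * (f₂ * star f₂) := by
  have h21' : star f₁ * star f₂ = 0 := by rw [← star_mul, h21, star_zero]
  rw [star_add, star_star, sub_mul, mul_add, mul_add, h21, h21', ← h1]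
  noncomm_ring

theorem mul_star_mul_self_of_mul_eq_zero (h21 : f₂ * f₁ = 0)
    (h2 : f₁ * star f₁ + star f₂ * f₂ = 1) : f₂ * star f₂ * f₂ = f₂ := by
  calc f₂ * star f₂ * f₂ = f₂ * (f₁ * star f₁ + star f₂ * f₂) - f₂ * f₁ * star f₁ := by noncomm_ring
    _ = f₂ := by rw [h2, h21]; noncomm_ring

theorem mul_star_mul_star_add_self (h12 : f₁ * f₂ = 0) (hf₂ : f₂ * star f₂ * f₂ = f₂) :
    f₂ * star f₂ * (star f₁ + f₂) = f₂ := by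
  have h12' : star f₂ * star f₁ = 0 := by rw [← star_mul, h12, star_zero]
  rw [mul_add, hf₂, mul_assoc, h12', mul_zero, zero_add]

end StarRing

theorem stmt_9 {E : Type*} [NormedAddCommGroup E] [InnerProductSpace ℂ E] [CompleteSpace E]
    (F₁ F₂ : E →L[ℂ] E)
    (h12 : F₁ * F₂ = 0) (h21 : F₂ * F₁ = 0)
    (h1 : adjoint F₁ * F₁ + F₂ * adjoint F₂ = 1)
    (h2 : F₁ * adjoint F₁ + adjoint F₂ * F₂ = 1)
    (U₁ U₂ Q : E →L[ℂ] E)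
    (hU₁ : U₁ = adjoint F₁ + F₂) (hU₂ : U₂ = adjoint F₁ - F₂)
    (hQ : Q = (2 : ℂ)⁻¹ • (1 - U₂ * adjoint U₁)) :
    adjoint F₁ = (1 - Q) * U₁ ∧ F₂ = Q * U₁ := by
  simp only [← star_eq_adjoint] at *
  have hQ_eq : Q = F₂ * star F₂ := by
    rw [hQ, hU₂, hU₁, star_sub_mul_star_star_add h21 h1, sub_sub_cancel, two_mul, ← two_smul ℂ,
      smul_smul, inv_mul_cancel₀ two_ne_zero, one_smul]
  have hQU₁ : Q * U₁ = F₂ := by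
    rw [hQ_eq, hU₁, mul_star_mul_star_add_self h12 (mul_star_mul_self_of_mul_eq_zero h21 h2)]
  refine ⟨?_, hQU₁.symm⟩
  rw [sub_mul, one_mul, hQU₁, hU₁, add_sub_cancel_right]
end

section
/- Let P be a contraction on a complex Hilbert space H and A, B bounded operators such that A − B*P = D_P F₁ D_P and B − A*P = D_P F₂ D_P for bounded operators F₁, F₂ on the closure of the range of D_P, where D_P = (I − P*P)^{1/2}. Then F₁ and F₂ are uniquely determined by these equations. -/
/-!
For self-adjoint `D` the kernel of `D` is the orthogonal complement of `𝒟 = closure (range D)`,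
so `D` is injective on `𝒟` and can be cancelled on the left of `D F D = D G D`. On the right,
`F D = G D` makes `F` and `G` agree on `range D`, hence on `𝒟` by continuity, and both vanish
on `𝒟ᗮ`.
-/

open ContinuousLinearMap

namespace ContinuousLinearMap

variable {𝕜 E V W : Type*} [RCLike 𝕜] [NormedAddCommGroup E] [InnerProductSpace 𝕜 E]
  [NormedAddCommGroup V] [NormedSpace 𝕜 V] [NormedAddCommGroup W] [NormedSpace 𝕜 W]

theorem eq_of_comp_eq_of_forall_mem_orthogonal_ker {T : E →L[𝕜] W} {X Y : V →L[𝕜] E}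
    (hX : ∀ v, X v ∈ (LinearMap.ker (T : E →ₗ[𝕜] W))ᗮ)
    (hY : ∀ v, Y v ∈ (LinearMap.ker (T : E →ₗ[𝕜] W))ᗮ)
    (h : T ∘L X = T ∘L Y) : X = Y := by
  ext v
  have hker : X v - Y v ∈ LinearMap.ker (T : E →ₗ[𝕜] W) := by
    simpa [sub_eq_zero] using congr($h v)
  have hperp : X v - Y v ∈ (LinearMap.ker (T : E →ₗ[𝕜] W))ᗮ := Submodule.sub_mem _ (hX v) (hY v)
  exact sub_eq_zero.mp <| (Submodule.mem_bot 𝕜).mp <|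
    (Submodule.inf_orthogonal_eq_bot _).le ⟨hker, hperp⟩

theorem eq_of_comp_eq_of_forall_orthogonal_range_apply_eq_zero [CompleteSpace E] {T : V →L[𝕜] E} {X Y : E →L[𝕜] W}
    (hX : ∀ x ∈ (LinearMap.range (T : V →ₗ[𝕜] E)).topologicalClosureᗮ, X x = 0)
    (hY : ∀ x ∈ (LinearMap.range (T : V →ₗ[𝕜] E)).topologicalClosureᗮ, Y x = 0)
    (h : X ∘L T = Y ∘L T) : X = Y := by
  set S := (LinearMap.range (T : V →ₗ[𝕜] E)).topologicalClosure
  have hS : S ≤ LinearMap.ker ((X - Y : E →L[𝕜] W) : E →ₗ[𝕜] W) := by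
    refine Submodule.topologicalClosure_minimal _ ?_ (X - Y).isClosed_ker
    rintro _ ⟨v, rfl⟩
    simpa [sub_eq_zero] using congr($h v)
  have hSperp : Sᗮ ≤ LinearMap.ker ((X - Y : E →L[𝕜] W) : E →ₗ[𝕜] W) := fun x hx => by
    simp [hX x hx, hY x hx]
  ext x
  have hx : x ∈ S ⊔ Sᗮ := by
    rw [Submodule.sup_orthogonal_of_hasOrthogonalProjection]
    trivial
  simpa [sub_eq_zero] using sup_le hS hSperp hx

end ContinuousLinearMap

namespace IsSelfAdjoint

variable {𝕜 E : Type*} [RCLike 𝕜] [NormedAddCommGroup E] [InnerProductSpace 𝕜 E] [CompleteSpace E]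

theorem orthogonal_ker {D : E →L[𝕜] E} (hD : IsSelfAdjoint D) :
    (LinearMap.ker (D : E →ₗ[𝕜] E))ᗮ = (LinearMap.range (D : E →ₗ[𝕜] E)).topologicalClosure := by
  rw [D.orthogonal_ker, hD.adjoint_eq]

theorem eq_of_mul_mul_eq {D X Y : E →L[𝕜] E} (hD : IsSelfAdjoint D)
    (hXran : ∀ x, X x ∈ (LinearMap.range (D : E →ₗ[𝕜] E)).topologicalClosure)
    (hYran : ∀ x, Y x ∈ (LinearMap.range (D : E →ₗ[𝕜] E)).topologicalClosure)
    (hXsupp : ∀ x ∈ (LinearMap.range (D : E →ₗ[𝕜] E)).topologicalClosureᗮ, X x = 0)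
    (hYsupp : ∀ x ∈ (LinearMap.range (D : E →ₗ[𝕜] E)).topologicalClosureᗮ, Y x = 0)
    (h : D * X * D = D * Y * D) : X = Y := by
  refine eq_of_comp_eq_of_forall_orthogonal_range_apply_eq_zero hXsupp hYsupp ?_
  refine eq_of_comp_eq_of_forall_mem_orthogonal_ker (T := D) ?_ ?_ h
  all_goals intro v; rw [hD.orthogonal_ker]
  exacts [hXran _, hYran _]

end IsSelfAdjoint

theorem stmt_19_general {H : Type*} [NormedAddCommGroup H] [InnerProductSpace ℂ H] [CompleteSpace H]
    (P : H →L[ℂ] H)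
    (D : H →L[ℂ] H) (hDpos : D.IsPositive)
    (A B : H →L[ℂ] H)
    (F₁ F₂ G₁ G₂ : H →L[ℂ] H)
    -- F₁, F₂, G₁, G₂ are operators on the defect space 𝒟_P = closure(range D):
    (hF₁ran : ∀ x, F₁ x ∈ (LinearMap.range (D : H →ₗ[ℂ] H)).topologicalClosure)
    (hF₂ran : ∀ x, F₂ x ∈ (LinearMap.range (D : H →ₗ[ℂ] H)).topologicalClosure)
    (hG₁ran : ∀ x, G₁ x ∈ (LinearMap.range (D : H →ₗ[ℂ] H)).topologicalClosure)
    (hG₂ran : ∀ x, G₂ x ∈ (LinearMap.range (D : H →ₗ[ℂ] H)).topologicalClosure)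
    (hF₁supp : ∀ x ∈ ((LinearMap.range (D : H →ₗ[ℂ] H)).topologicalClosure : Submodule ℂ H)ᗮ, F₁ x = 0)
    (hF₂supp : ∀ x ∈ ((LinearMap.range (D : H →ₗ[ℂ] H)).topologicalClosure : Submodule ℂ H)ᗮ, F₂ x = 0)
    (hG₁supp : ∀ x ∈ ((LinearMap.range (D : H →ₗ[ℂ] H)).topologicalClosure : Submodule ℂ H)ᗮ, G₁ x = 0)
    (hG₂supp : ∀ x ∈ ((LinearMap.range (D : H →ₗ[ℂ] H)).topologicalClosure : Submodule ℂ H)ᗮ, G₂ x = 0)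
    (hAF : A - adjoint B * P = D * F₁ * D) (hBF : B - adjoint A * P = D * F₂ * D)
    (hAG : A - adjoint B * P = D * G₁ * D) (hBG : B - adjoint A * P = D * G₂ * D) :
    F₁ = G₁ ∧ F₂ = G₂ :=
  ⟨IsSelfAdjoint.eq_of_mul_mul_eq hDpos.isSelfAdjoint hF₁ran hG₁ran hF₁supp hG₁supp (hAF ▸ hAG),
    IsSelfAdjoint.eq_of_mul_mul_eq hDpos.isSelfAdjoint hF₂ran hG₂ran hF₂supp hG₂supp (hBF ▸ hBG)⟩

theorem stmt_19 {H : Type*} [NormedAddCommGroup H] [InnerProductSpace ℂ H] [CompleteSpace H]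
    (P : H →L[ℂ] H) (hP : ‖P‖ ≤ 1)
    (D : H →L[ℂ] H) (hDpos : D.IsPositive)
    (hD2 : D * D = 1 - adjoint P * P)
    (A B : H →L[ℂ] H)
    (F₁ F₂ G₁ G₂ : H →L[ℂ] H)
    -- F₁, F₂, G₁, G₂ are operators on the defect space 𝒟_P = closure(range D):
    (hF₁ran : ∀ x, F₁ x ∈ (LinearMap.range (D : H →ₗ[ℂ] H)).topologicalClosure)
    (hF₂ran : ∀ x, F₂ x ∈ (LinearMap.range (D : H →ₗ[ℂ] H)).topologicalClosure)
    (hG₁ran : ∀ x, G₁ x ∈ (LinearMap.range (D : H →ₗ[ℂ] H)).topologicalClosure)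
    (hG₂ran : ∀ x, G₂ x ∈ (LinearMap.range (D : H →ₗ[ℂ] H)).topologicalClosure)
    (hF₁supp : ∀ x ∈ ((LinearMap.range (D : H →ₗ[ℂ] H)).topologicalClosure : Submodule ℂ H)ᗮ, F₁ x = 0)
    (hF₂supp : ∀ x ∈ ((LinearMap.range (D : H →ₗ[ℂ] H)).topologicalClosure : Submodule ℂ H)ᗮ, F₂ x = 0)
    (hG₁supp : ∀ x ∈ ((LinearMap.range (D : H →ₗ[ℂ] H)).topologicalClosure : Submodule ℂ H)ᗮ, G₁ x = 0)
    (hG₂supp : ∀ x ∈ ((LinearMap.range (D : H →ₗ[ℂ] H)).topologicalClosure : Submodule ℂ H)ᗮ, G₂ x = 0)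
    (hAF : A - adjoint B * P = D * F₁ * D) (hBF : B - adjoint A * P = D * F₂ * D)
    (hAG : A - adjoint B * P = D * G₁ * D) (hBG : B - adjoint A * P = D * G₂ * D) :
    F₁ = G₁ ∧ F₂ = G₂ :=
  stmt_19_general P D hDpos A B F₁ F₂ G₁ G₂ hF₁ran hF₂ran hG₁ran hG₂ran hF₁supp hF₂supp hG₁supp
    hG₂supp hAF hBF hAG hBG
end
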